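/- arXiv:1904.00552 — 3 statements merged into one kernel-verified Lean document; each statement's English description precedes it below -/
import Mathlib

section
/- Let X be a locally compact Hausdorff space, A a C*-algebra, C a closed linear subspace of A, and Y a closed subset of X. Then the closed linear span in C₀(X,A) of the functions x ↦ g(x)·c, where g ranges over the continuous complex-valued functions on X vanishing at infinity with g(Y) ⊆ {0} and c ranges over C, equals { f ∈ C₀(X,A) : f(y) = 0 for all y ∈ Y and f(x) ∈ C for all x ∈ X }. -/
open scoped ZeroAtInfty

open Set Filter Metric

/-! The closed span lies in the right-hand side, a closed subspace containing every generator.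
Conversely, let `f` vanish on `Y` with values in `C`, and `δ > 0`. Cover the compact set
`{x | δ ≤ ‖f x‖}` by finitely many open sets `Yᶜ ∩ f⁻¹ (ball (f z) δ)` and take a subordinate
partition of unity `(p_z)`. Each `x ↦ p_z x • f z` is a generator, and their sum is within `2δ`
of `f`, because
`f x - ∑ p_z x • f z = (1 - ∑ p_z x) • f x + ∑ p_z x • (f x - f z)`,
where the first term is small since `∑ p_z x = 1` wherever `‖f x‖ ≥ δ`. -/

theorem norm_sub_sum_smul_le {𝕜 E ι : Type*} [RCLike 𝕜] [SeminormedAddCommGroup E]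
    [NormedSpace 𝕜 E] (s : Finset ι) {w : ι → ℝ} (hw : ∀ i ∈ s, 0 ≤ w i) {v : E} {c : ι → E}
    {δ : ℝ} (hc : ∀ i ∈ s, w i ≠ 0 → ‖v - c i‖ ≤ δ) :
    ‖v - ∑ i ∈ s, (w i : 𝕜) • c i‖ ≤ |1 - ∑ i ∈ s, w i| * ‖v‖ + (∑ i ∈ s, w i) * δ := by
  have hsplit : v - ∑ i ∈ s, (w i : 𝕜) • c i =
      ((1 - ∑ i ∈ s, w i : ℝ) : 𝕜) • v + ∑ i ∈ s, (w i : 𝕜) • (v - c i) := by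
    simp only [smul_sub, Finset.sum_sub_distrib, ← Finset.sum_smul, RCLike.ofReal_sub,
      RCLike.ofReal_one, RCLike.ofReal_sum, sub_smul, one_smul]
    abel
  have hterm : ∀ i ∈ s, ‖(w i : 𝕜) • (v - c i)‖ ≤ w i * δ := by
    intro i hi
    rw [norm_smul, RCLike.norm_ofReal, abs_of_nonneg (hw i hi)]
    rcases eq_or_ne (w i) 0 with h0 | h0
    · simp [h0]
    · exact mul_le_mul_of_nonneg_left (hc i hi h0) (hw i hi)
  calc ‖v - ∑ i ∈ s, (w i : 𝕜) • c i‖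
      ≤ ‖((1 - ∑ i ∈ s, w i : ℝ) : 𝕜) • v‖ + ∑ i ∈ s, ‖(w i : 𝕜) • (v - c i)‖ := by
        rw [hsplit]; exact (norm_add_le _ _).trans (by gcongr; exact norm_sum_le _ _)
    _ ≤ |1 - ∑ i ∈ s, w i| * ‖v‖ + (∑ i ∈ s, w i) * δ := by
        rw [norm_smul, RCLike.norm_ofReal, Finset.sum_mul]
        gcongr with i hi
        exact hterm i hi

namespace ZeroAtInftyContinuousMap

variable {X E : Type*} [TopologicalSpace X]

instance [PseudoMetricSpace E] [Zero E] : ContinuousEvalConst C₀(X, E) X E where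
  continuous_eval_const x :=
    (continuous_eval_const (F := BoundedContinuousFunction X E) x).comp isometry_toBCF.continuous

section NormedAddCommGroup

variable [NormedAddCommGroup E]

theorem isCompact_setOf_le_norm (f : C₀(X, E)) {δ : ℝ} (hδ : 0 < δ) :
    IsCompact {x | δ ≤ ‖f x‖} := by
  have hsmall : {x | ‖f x‖ < δ} ∈ cocompact X := by
    simpa [preimage, mem_ball] using zero_at_infty f (ball_mem_nhds 0 hδ)
  obtain ⟨t, ht, hsub⟩ := mem_cocompact'.mp hsmall
  exact ht.of_isClosed_subset (isClosed_le continuous_const (map_continuous f).norm)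
    fun x hx => hsub (not_lt.mpr (show δ ≤ ‖f x‖ from hx))

theorem norm_le_of_forall_le (f : C₀(X, E)) {r : ℝ} (hr : 0 ≤ r) (hf : ∀ x, ‖f x‖ ≤ r) :
    ‖f‖ ≤ r := by
  rw [← norm_toBCF_eq_norm]
  exact (BoundedContinuousFunction.norm_le hr).mpr hf

variable {𝕜 : Type*} [RCLike 𝕜] [NormedSpace 𝕜 E]

def smulConst (g : C₀(X, 𝕜)) (c : E) : C₀(X, E) where
  toFun x := g x • c
  continuous_toFun := (map_continuous g).smul continuous_const
  zero_at_infty' := by simpa using (zero_at_infty g).smul_const c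

def ofRealOfHasCompactSupport (p : C(X, ℝ)) (hp : HasCompactSupport p) : C₀(X, 𝕜) where
  toFun x := p x
  continuous_toFun := RCLike.continuous_ofReal.comp p.continuous
  zero_at_infty' := (hp.comp_left RCLike.ofReal_zero).is_zero_at_infty

def vanishingOnValuedIn (Y : Set X) (C : Submodule 𝕜 E) : Submodule 𝕜 C₀(X, E) where
  carrier := {f | (∀ y ∈ Y, f y = 0) ∧ ∀ x, f x ∈ C}
  add_mem' hf hg := ⟨fun y hy => by simp [hf.1 y hy, hg.1 y hy],
    fun x => C.add_mem (hf.2 x) (hg.2 x)⟩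
  zero_mem' := ⟨fun _ _ => rfl, fun _ => C.zero_mem⟩
  smul_mem' a f hf := ⟨fun y hy => by simp [hf.1 y hy], fun x => C.smul_mem a (hf.2 x)⟩

theorem isClosed_vanishingOnValuedIn (Y : Set X) {C : Submodule 𝕜 E}
    (hC : IsClosed (C : Set E)) : IsClosed (vanishingOnValuedIn Y C : Set C₀(X, E)) := by
  have : (vanishingOnValuedIn Y C : Set C₀(X, E)) =
      (⋂ y ∈ Y, {f | f y = 0}) ∩ ⋂ x, (fun f : C₀(X, E) => f x) ⁻¹' C := by
    ext f; simp [vanishingOnValuedIn]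
  rw [this]
  exact (isClosed_biInter fun y _ => isClosed_eq (continuous_eval_const y) continuous_const).inter
    (isClosed_iInter fun x => hC.preimage (continuous_eval_const x))

theorem sum_apply {ι : Type*} (s : Finset ι) (f : ι → C₀(X, E)) (x : X) :
    (∑ i ∈ s, f i) x = ∑ i ∈ s, f i x :=
  map_sum (⟨⟨fun f : C₀(X, E) => f x, rfl⟩, fun _ _ => rfl⟩ : C₀(X, E) →+ E) f s

variable [LocallyCompactSpace X] [T2Space X] {Y : Set X} {f : C₀(X, E)} {δ : ℝ}

theorem exists_partitionOfUnity_subordinate_ball (hY : IsClosed Y) (hfY : ∀ y ∈ Y, f y = 0)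
    (hδ : 0 < δ) :
    ∃ (t : Finset X) (p : PartitionOfUnity t X {x | δ ≤ ‖f x‖}),
      (∀ i, HasCompactSupport (p i)) ∧ p.IsSubordinate fun i => Yᶜ ∩ f ⁻¹' ball (f i) δ := by
  set V : X → Set X := fun z => Yᶜ ∩ f ⁻¹' ball (f z) δ
  have hVopen (z : X) : IsOpen (V z) :=
    hY.isOpen_compl.inter (isOpen_ball.preimage (map_continuous f))
  have hVmem (z : X) (hz : δ ≤ ‖f z‖) : z ∈ V z := by
    refine ⟨fun hzY => ?_, mem_ball_self hδ⟩
    rw [hfY z hzY, norm_zero] at hz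
    exact hz.not_gt hδ
  have hK := isCompact_setOf_le_norm f hδ
  obtain ⟨t, -, ht⟩ := hK.elim_nhds_subcover V fun z hz => (hVopen z).mem_nhds (hVmem z hz)
  obtain ⟨p, hsub, hcs⟩ := PartitionOfUnity.exists_isSubordinate_of_locallyFinite_t2space hK
    (fun i : t => V i) (fun i => hVopen i) (locallyFinite_of_finite _)
    (by simpa only [iUnion_subtype, Finset.mem_coe] using ht)
  exact ⟨t, p, hcs, hsub⟩

theorem exists_sum_smulConst_near (hY : IsClosed Y) (hfY : ∀ y ∈ Y, f y = 0) (hδ : 0 < δ) :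
    ∃ (t : Finset X) (g : t → C₀(X, 𝕜)),
      (∀ i, ∀ y ∈ Y, g i y = 0) ∧ ‖f - ∑ i, smulConst (g i) (f i)‖ ≤ 2 * δ := by
  obtain ⟨t, p, hcs, hsub⟩ := exists_partitionOfUnity_subordinate_ball hY hfY hδ
  have hsupp (i : t) (x : X) (hx : p i x ≠ 0) : x ∈ Yᶜ ∩ f ⁻¹' ball (f i) δ :=
    hsub i (subset_tsupport _ hx)
  refine ⟨t, fun i => ofRealOfHasCompactSupport (p i) (hcs i), fun i y hy => ?_,
    norm_le_of_forall_le _ (by positivity) fun x => ?_⟩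
  · by_contra hne
    exact (hsupp i y (by simpa [ofRealOfHasCompactSupport] using hne)).1 hy
  set S := ∑ i, p i x
  have hS₀ : 0 ≤ S := Finset.sum_nonneg fun i _ => p.nonneg i x
  have hS₁ : S ≤ 1 := by simpa only [finsum_eq_sum_of_fintype] using p.sum_le_one x
  have hcomplement : |1 - S| * ‖f x‖ ≤ δ := by
    by_cases hx : δ ≤ ‖f x‖
    · have hS : S = 1 := by simpa only [finsum_eq_sum_of_fintype] using p.sum_eq_one hx
      simp [hS, hδ.le]
    · rw [abs_of_nonneg (by linarith)]
      nlinarith [norm_nonneg (f x)]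
  calc ‖(f - ∑ i, smulConst (ofRealOfHasCompactSupport (p i) (hcs i)) (f i)) x‖
      ≤ |1 - S| * ‖f x‖ + S * δ := by
        rw [sub_apply, sum_apply]
        exact norm_sub_sum_smul_le (𝕜 := 𝕜) Finset.univ (fun i _ => p.nonneg i x)
            fun i _ hi => (mem_ball_iff_norm.mp (hsupp i x hi).2).le
    _ ≤ δ + 1 * δ := by gcongr
    _ = 2 * δ := by ring

end NormedAddCommGroup

end ZeroAtInftyContinuousMap

open ZeroAtInftyContinuousMap

theorem stmt2_general {X A : Type*} [TopologicalSpace X] [LocallyCompactSpace X] [T2Space X]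
    [NonUnitalNormedRing A] [NormedSpace ℂ A]
    (C : Submodule ℂ A) (hC : IsClosed (C : Set A))
    (Y : Set X) (hY : IsClosed Y) :
    closure (Submodule.span ℂ {f : C₀(X, A) | ∃ g : C₀(X, ℂ), ∃ c ∈ C,
        (∀ y ∈ Y, g y = 0) ∧ ∀ x, f x = g x • c} : Set C₀(X, A)) =
      {f : C₀(X, A) | (∀ y ∈ Y, f y = 0) ∧ ∀ x, f x ∈ C} := by
  have hspan : Submodule.span ℂ {f : C₀(X, A) | ∃ g : C₀(X, ℂ), ∃ c ∈ C,
      (∀ y ∈ Y, g y = 0) ∧ ∀ x, f x = g x • c} ≤ vanishingOnValuedIn Y C := by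
    refine Submodule.span_le.mpr fun f ⟨g, c, hc, hgY, hf⟩ => ⟨fun y hy => ?_, fun x => ?_⟩
    · rw [hf, hgY y hy, zero_smul]
    · exact hf x ▸ C.smul_mem _ hc
  refine (closure_minimal hspan (isClosed_vanishingOnValuedIn Y hC)).antisymm ?_
  rintro f ⟨hfY, hfC⟩
  refine Metric.mem_closure_iff.mpr fun ε hε => ?_
  obtain ⟨t, g, hgY, hfg⟩ := exists_sum_smulConst_near (𝕜 := ℂ) hY hfY (by positivity : 0 < ε / 3)
  refine ⟨∑ i, smulConst (g i) (f i), Submodule.sum_mem _ fun i _ =>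
    Submodule.subset_span ⟨g i, f i, hfC i, hgY i, fun _ => rfl⟩, ?_⟩
  rw [dist_eq_norm]
  linarith

/-- For a closed linear subspace `C ⊆ A` and a closed subset `Y ⊆ X`, the
closed linear span in `C₀(X, A)` of the functions `x ↦ g(x) • c` with `g ∈ C₀(X)` vanishing
on `Y` and `c ∈ C` equals `{f ∈ C₀(X, A) : f(Y) = {0} and f(X) ⊆ C}`.
(Under the canonical isomorphism this identifies `J(Y) ⊗^min C`.) -/
theorem stmt2 {X A : Type*} [TopologicalSpace X] [LocallyCompactSpace X] [T2Space X]
    [NonUnitalNormedRing A] [StarRing A] [CStarRing A] [NormedSpace ℂ A]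
    [IsScalarTower ℂ A A] [SMulCommClass ℂ A A] [StarModule ℂ A] [CompleteSpace A]
    (C : Submodule ℂ A) (hC : IsClosed (C : Set A))
    (Y : Set X) (hY : IsClosed Y) :
    closure (Submodule.span ℂ {f : C₀(X, A) | ∃ g : C₀(X, ℂ), ∃ c ∈ C,
        (∀ y ∈ Y, g y = 0) ∧ ∀ x, f x = g x • c} : Set C₀(X, A)) =
      {f : C₀(X, A) | (∀ y ∈ Y, f y = 0) ∧ ∀ x, f x ∈ C} :=
  stmt2_general C hC Y hY
end

section
/- Let X be a nonempty locally compact Hausdorff space and A a C*-algebra. If C₀(X,A) has the centre-quotient property, then A has the centre-quotient property. -/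
/-!
Evaluation at a point `x` of `X` is a continuous surjective homomorphism `C₀(X, A) → A`
(surjective because a compactly supported Urysohn function `f` with `f x = 1` lifts `a` to
`f • a`). The centre-quotient property passes along any continuous surjective homomorphism
`φ : B → C`: for a closed ideal `I` of `C`, an element `a = φ b` central modulo `I` lifts to `b`,
central modulo the closed ideal `φ⁻¹(I)`, hence `b ≡ z` with `z` central, and `φ z` is central
in `C` by surjectivity.
-/

open scoped ZeroAtInfty Pointwise

/-- A topological (possibly non-unital) ring `B` has the *centre-quotient property* if for
every closed two-sided ideal `I` of `B`, the centre of the quotient `B/I` equals the image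
of `Z(B) + I` under the quotient map. -/
def HasCentreQuotientProperty (B : Type*) [NonUnitalNonAssocRing B] [TopologicalSpace B] :
    Prop :=
  ∀ I : TwoSidedIdeal B, IsClosed (I : Set B) →
    {z : I.ringCon.Quotient | ∀ w : I.ringCon.Quotient, w * z = z * w} =
      (fun b : B => (b : I.ringCon.Quotient)) ''
        ({z : B | ∀ b : B, b * z = z * b} + (I : Set B))

namespace TwoSidedIdeal

variable {B : Type*} [NonUnitalNonAssocRing B] (I : TwoSidedIdeal B)

theorem mk_mem_centre_quotient_iff (a : B) :
    (a : I.ringCon.Quotient) ∈ {z : I.ringCon.Quotient | ∀ w, w * z = z * w} ↔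
      ∀ c : B, c * a - a * c ∈ I := by
  refine ⟨fun ha c => (I.rel_iff _ _).mp ((RingCon.eq _).mp (ha c)), fun ha w => ?_⟩
  obtain ⟨c, rfl⟩ := Quotient.mk''_surjective w
  exact (RingCon.eq _).mpr ((I.rel_iff _ _).mpr (ha c))

theorem mk_mem_image_centre_add_iff (a : B) :
    (a : I.ringCon.Quotient) ∈ (fun b : B => (b : I.ringCon.Quotient)) ''
        ({z : B | ∀ b : B, b * z = z * b} + (I : Set B)) ↔
      ∃ z : B, (∀ b : B, b * z = z * b) ∧ a - z ∈ I := by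
  constructor
  · rintro ⟨_, ⟨z, hz, i, hi, rfl⟩, hza⟩
    refine ⟨z, hz, ?_⟩
    have hrel := I.add_mem ((I.rel_iff _ _).mp ((RingCon.eq _).mp hza.symm)) hi
    rwa [sub_add_eq_sub_sub, sub_add_cancel] at hrel
  · rintro ⟨z, hz, hza⟩
    refine ⟨z + (a - z), Set.add_mem_add hz hza, ?_⟩
    rw [add_sub_cancel]

theorem image_centre_add_subset_centre_quotient :
    (fun b : B => (b : I.ringCon.Quotient)) ''
        ({z : B | ∀ b : B, b * z = z * b} + (I : Set B)) ⊆
      {z : I.ringCon.Quotient | ∀ w, w * z = z * w} := by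
  rintro _ ⟨_, ⟨z, hz, i, hi, rfl⟩, rfl⟩
  refine (I.mk_mem_centre_quotient_iff _).mpr fun c => ?_
  have hcomm : c * (z + i) - (z + i) * c = c * i - i * c := by
    rw [mul_add, add_mul, hz c]; abel
  rw [hcomm]
  exact I.sub_mem (I.mul_mem_left _ _ hi) (I.mul_mem_right _ _ hi)

end TwoSidedIdeal

theorem hasCentreQuotientProperty_iff {B : Type*} [NonUnitalNonAssocRing B]
    [TopologicalSpace B] :
    HasCentreQuotientProperty B ↔ ∀ I : TwoSidedIdeal B, IsClosed (I : Set B) →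
      ∀ a : B, (∀ c : B, c * a - a * c ∈ I) → ∃ z : B, (∀ b : B, b * z = z * b) ∧ a - z ∈ I := by
  refine forall₂_congr fun I _ => ?_
  rw [Set.Subset.antisymm_iff, and_iff_left I.image_centre_add_subset_centre_quotient]
  constructor
  · intro hI a ha
    exact (I.mk_mem_image_centre_add_iff a).mp (hI ((I.mk_mem_centre_quotient_iff a).mpr ha))
  · intro hI w hw
    obtain ⟨a, rfl⟩ := Quotient.mk''_surjective w
    exact (I.mk_mem_image_centre_add_iff a).mpr (hI a ((I.mk_mem_centre_quotient_iff a).mp hw))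

theorem HasCentreQuotientProperty.of_surjective {B C : Type*} [NonUnitalNonAssocRing B]
    [TopologicalSpace B] [NonUnitalNonAssocRing C] [TopologicalSpace C] (φ : B →ₙ+* C)
    (hφ : Continuous φ) (hφ_surj : Function.Surjective φ) (hB : HasCentreQuotientProperty B) :
    HasCentreQuotientProperty C := by
  rw [hasCentreQuotientProperty_iff] at hB ⊢
  intro I hI a ha
  have hJ : ((I.comap φ : TwoSidedIdeal B) : Set B) = φ ⁻¹' I := by
    ext; exact TwoSidedIdeal.mem_comap φ
  obtain ⟨b, rfl⟩ := hφ_surj a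
  obtain ⟨z, hz, hbz⟩ := hB (I.comap φ) (hJ ▸ hI.preimage hφ) b fun c => by
    simpa [TwoSidedIdeal.mem_comap] using ha (φ c)
  refine ⟨φ z, fun c => ?_, by simpa [TwoSidedIdeal.mem_comap] using hbz⟩
  obtain ⟨c, rfl⟩ := hφ_surj c
  rw [← map_mul, hz, map_mul]

namespace ZeroAtInftyContinuousMap

variable {X : Type*} [TopologicalSpace X]

instance instContinuousEvalConst {A : Type*} [PseudoMetricSpace A] [Zero A] : ContinuousEvalConst C₀(X, A) X A where
  continuous_eval_const x :=
    (continuous_eval_const (F := BoundedContinuousFunction X A) x).comp (isometry_toBCF (α := X) (β := A)).continuous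

def evalNonUnitalRingHom (R : Type*) [NonUnitalNonAssocSemiring R] [TopologicalSpace R]
    [IsTopologicalSemiring R] (x : X) : C₀(X, R) →ₙ+* R where
  toFun F := F x
  map_add' _ _ := rfl
  map_mul' _ _ := rfl
  map_zero' := rfl

theorem exists_apply_eq [RegularSpace X] [LocallyCompactSpace X] {A : Type*} [TopologicalSpace A]
    [Zero A] [MulActionWithZero ℝ A] [ContinuousSMul ℝ A] (x : X) (a : A) :
    ∃ F : C₀(X, A), F x = a := by
  obtain ⟨f, hfx, -, hf, -⟩ := exists_continuous_one_zero_of_isCompact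
    isCompact_singleton isClosed_empty (Set.disjoint_empty {x})
  refine ⟨⟨⟨fun y => f y • a, by fun_prop⟩, ?_⟩, ?_⟩
  · simpa using hf.is_zero_at_infty.smul_const a
  · simp [hfx rfl]

end ZeroAtInftyContinuousMap

theorem stmt10_general {X A : Type*} [TopologicalSpace X] [LocallyCompactSpace X] [T2Space X]
    [Nonempty X]
    [NonUnitalNormedRing A] [NormedSpace ℂ A]
    (h : HasCentreQuotientProperty C₀(X, A)) :
    HasCentreQuotientProperty A := by
  obtain ⟨x⟩ := ‹Nonempty X›
  exact h.of_surjective (ZeroAtInftyContinuousMap.evalNonUnitalRingHom A x)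
    (continuous_eval_const x) fun a => ZeroAtInftyContinuousMap.exists_apply_eq x a

/-- For a nonempty locally compact Hausdorff space `X` and a C*-algebra
`A`, if `C₀(X, A)` has the centre-quotient property, then so does `A`. -/
theorem stmt10 {X A : Type*} [TopologicalSpace X] [LocallyCompactSpace X] [T2Space X]
    [Nonempty X]
    [NonUnitalNormedRing A] [StarRing A] [CStarRing A] [NormedSpace ℂ A]
    [IsScalarTower ℂ A A] [SMulCommClass ℂ A A] [StarModule ℂ A] [CompleteSpace A]
    (h : HasCentreQuotientProperty C₀(X, A)) :
    HasCentreQuotientProperty A :=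
  stmt10_general h
end

section
/- Let X be a locally compact Hausdorff space and A a C*-algebra with exactly n closed two-sided ideals I₁,…,Iₙ, where I₁ = {0} and Iₙ = A, and let S = (S₁,…,Sₙ) be a family of closed subsets of X compatible with (I₁,…,Iₙ) and with Sₙ = X. For i ∈ {1,…,n−1} set α_i = { j ∈ {1,…,n} : I_j ⊄ I_i }, and for each r ∈ {1,…,n} set γ_r = { k ∈ {1,…,n} : I_r ⊄ I_k } (⊄ meaning 'is not contained in'). Then ⋂_{r∈α_i} ⋃_{k∈γ_r} S_k = S_i. -/
open scoped ZeroAtInfty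

/-- Let `A` have exactly `n` closed two-sided ideals `I₁, …, Iₙ` with
`I₁ = {0}`, `Iₙ = A`, and let `S = (S₁, …, Sₙ)` be a family of closed subsets of `X`
compatible with `(I₁, …, Iₙ)` and with `Sₙ = X`. For `i ∈ {1, …, n−1}`, with
`αᵢ = {j : Iⱼ ⊄ Iᵢ}` and `γᵣ = {k : Iᵣ ⊄ Iₖ}`, one has
`⋂_{r ∈ αᵢ} ⋃_{k ∈ γᵣ} Sₖ = Sᵢ`. -/
theorem stmt16 {X A : Type*} [TopologicalSpace X] [LocallyCompactSpace X] [T2Space X]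
    [NonUnitalNormedRing A] [StarRing A] [CStarRing A] [NormedSpace ℂ A]
    [IsScalarTower ℂ A A] [SMulCommClass ℂ A A] [StarModule ℂ A] [CompleteSpace A]
    (n : ℕ) (hn : 0 < n) (I : Fin n → TwoSidedIdeal A)
    (hIclosed : ∀ j, IsClosed ((I j : Set A)))
    (hIinj : Function.Injective I)
    (hIall : ∀ J : TwoSidedIdeal A, IsClosed (J : Set A) → ∃ j, I j = J)
    (hI0 : I ⟨0, hn⟩ = ⊥) (hItop : I ⟨n - 1, by omega⟩ = ⊤)
    (S : Fin n → Set X) (hSclosed : ∀ j, IsClosed (S j))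
    (hcompat : ∀ (γ : Set (Fin n)) (i : Fin n),
      (⋂ j ∈ γ, (I j : Set A)) = (I i : Set A) → (⋂ j ∈ γ, S j) = S i)
    (hStop : S ⟨n - 1, by omega⟩ = Set.univ)
    (i : Fin n) (hi : (i : ℕ) < n - 1) :
    (⋂ r ∈ {j : Fin n | ¬ I j ≤ I i}, ⋃ k ∈ {k : Fin n | ¬ I r ≤ I k}, S k) = S i := by
  -- Monotonicity: I r ≤ I k → S r ⊆ S k
  have mono : ∀ r k : Fin n, I r ≤ I k → S r ⊆ S k := by
    intro r k hrk
    have h1 : (⋂ j ∈ {j : Fin n | I r ≤ I j}, (I j : Set A)) = (I r : Set A) := by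
      apply subset_antisymm
      · exact Set.biInter_subset_of_mem (show I r ≤ I r from le_refl _)
      · intro x hx
        simp only [Set.mem_iInter, Set.mem_setOf_eq, SetLike.mem_coe] at *
        exact fun j hj => hj hx
    have h2 := hcompat _ r h1
    rw [← h2]
    exact Set.biInter_subset_of_mem hrk
  ext x
  simp only [Set.mem_iInter, Set.mem_iUnion, Set.mem_setOf_eq]
  constructor
  · intro hx
    set β : Set (Fin n) := {k : Fin n | x ∈ S k} with hβ
    set J : TwoSidedIdeal A := ⨅ k : β, I k with hJ
    have hJcoe : (J : Set A) = ⋂ k ∈ β, (I k : Set A) := by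
      ext a
      simp only [SetLike.mem_coe, hJ, Set.mem_iInter]
      rw [TwoSidedIdeal.mem_iInf]
      exact ⟨fun h k hk => h ⟨k, hk⟩, fun h k => h k.1 k.2⟩
    have hJclosed : IsClosed (J : Set A) := by
      rw [hJcoe]
      exact isClosed_biInter fun k _ => hIclosed k
    obtain ⟨m, hm⟩ := hIall J hJclosed
    have hset : (⋂ k ∈ β, (I k : Set A)) = (I m : Set A) := by rw [hm, hJcoe]
    have hSm := hcompat β m hset
    have hxm : x ∈ S m := by
      rw [← hSm]
      exact Set.mem_iInter₂.2 fun k hk => hk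
    have hmi : I m ≤ I i := by
      by_contra h
      obtain ⟨k, hk1, hk2⟩ := hx m h
      have : J ≤ I k := iInf_le _ (⟨k, hk2⟩ : β)
      rw [← hm] at this
      exact hk1 this
    exact mono m i hmi hxm
  · intro hx r hr
    exact ⟨i, hr, hx⟩
end
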